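/- Let $\Omega \subset \mathbb{R}^N$ be open, $J \ge 0$ measurable and symmetric with $\mathcal{E}_J$ well-defined, and let $u \in \mathcal{V}^J(\Omega)$ satisfy $u \ge 0$ on $\mathbb{R}^N \setminus \Omega$. Then $u^- \in \mathcal{D}^J(\Omega)$ and $\mathcal{E}_J(u^-, u^-) \le -\mathcal{E}_J(u, u^-)$. -/

import Mathlib

/-!
Pointwise, with `a⁻ = -min a 0`, one has `|a⁻ - b⁻| ≤ |a - b|` and
`(a⁻ - b⁻)² ≤ -(a - b)(a⁻ - b⁻)`. The first bound dominates the cross term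
`(u(x) - u(y))(u⁻(x) - u⁻(y)) J(x,y)` by the integrand of `ρ(u,Ω)` on `Ω × ℝᴺ`; by symmetry of
`J` the same holds on `ℝᴺ × Ω`, and off both sets the cross term vanishes because `u⁻ = 0`
outside `Ω`. The second bound then gives integrability of the energy of `u⁻` and, after
integration, the estimate.
-/

open MeasureTheory Set

noncomputable section

variable {N : ℕ}

/-- The signed bilinear form `ℰ_J(v,w) = ½ ∫∫ (v(x)-v(y))(w(x)-w(y)) J(x,y) dx dy`. -/
def bilinForm (J : EuclideanSpace ℝ (Fin N) → EuclideanSpace ℝ (Fin N) → ℝ)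
    (v w : EuclideanSpace ℝ (Fin N) → ℝ) : ℝ :=
  (1 / 2) * ∫ p : EuclideanSpace ℝ (Fin N) × EuclideanSpace ℝ (Fin N),
    (v p.1 - v p.2) * (w p.1 - w p.2) * J p.1 p.2

theorem abs_negPart_sub_negPart_le (a b : ℝ) : |-min a 0 - -min b 0| ≤ |a - b| := by
  rw [neg_sub_neg, abs_sub_comm a b]
  simpa using abs_min_sub_min_le_max b 0 a 0

theorem sq_negPart_sub_negPart_le (a b : ℝ) :
    (-min a 0 - -min b 0) ^ 2 ≤ -((a - b) * (-min a 0 - -min b 0)) := by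
  rcases le_total a 0 with ha | ha <;> rcases le_total b 0 with hb | hb <;>
    simp only [min_eq_left, min_eq_right, ha, hb] <;> nlinarith

theorem sq_negPart_sub_negPart_mul_le (a b : ℝ) {j : ℝ} (hj : 0 ≤ j) :
    (-min a 0 - -min b 0) ^ 2 * j ≤ -((a - b) * (-min a 0 - -min b 0) * j) := by
  rw [← neg_mul]
  exact mul_le_mul_of_nonneg_right (sq_negPart_sub_negPart_le a b) hj

theorem integrable_of_integrableOn_prod_univ_of_swap_eq {α E : Type*} [MeasurableSpace α]
    [NormedAddCommGroup E] {μ : Measure α} [SFinite μ] {f : α × α → E} {s : Set α}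
    (hf : IntegrableOn f (s ×ˢ univ) (μ.prod μ)) (hswap : ∀ p, f p.swap = f p)
    (hzero : ∀ x ∉ s, ∀ y ∉ s, f (x, y) = 0) : Integrable f (μ.prod μ) := by
  have hf' : IntegrableOn f (univ ×ˢ s) (μ.prod μ) := by
    simpa only [Function.comp_def, hswap] using hf.swap
  refine (hf.union hf').integrable_of_forall_notMem_eq_zero fun p hp => ?_
  simp only [mem_union, mem_prod, mem_univ, and_true, true_and, not_or] at hp
  exact hzero _ hp.1 _ hp.2

section

variable {α : Type*} [MeasurableSpace α] {μ : Measure α} [SFinite μ] {J : α → α → ℝ}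
  {u : α → ℝ}

theorem integrable_mul_negPart_of_integrableOn (hJpos : ∀ x y, 0 ≤ J x y)
    (hJsym : ∀ x y, J x y = J y x) (hJmeas : Measurable fun p : α × α => J p.1 p.2)
    (hu : Measurable u) {s : Set α}
    (huρ : IntegrableOn (fun p : α × α => (u p.1 - u p.2) ^ 2 * J p.1 p.2) (s ×ˢ univ) (μ.prod μ))
    (hu0 : ∀ x ∉ s, 0 ≤ u x) :
    Integrable (fun p : α × α =>
      (u p.1 - u p.2) * (-min (u p.1) 0 - -min (u p.2) 0) * J p.1 p.2) (μ.prod μ) := by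
  have hv : Measurable fun x => -min (u x) 0 := (hu.min measurable_const).neg
  have hbound : ∀ p : α × α, ‖(u p.1 - u p.2) * (-min (u p.1) 0 - -min (u p.2) 0) * J p.1 p.2‖
      ≤ (u p.1 - u p.2) ^ 2 * J p.1 p.2 := fun p => by
    rw [Real.norm_eq_abs, abs_mul, abs_mul, abs_of_nonneg (hJpos _ _), ← sq_abs (u p.1 - u p.2),
      sq]
    exact mul_le_mul_of_nonneg_right
      (mul_le_mul_of_nonneg_left (abs_negPart_sub_negPart_le _ _) (abs_nonneg _)) (hJpos _ _)
  refine integrable_of_integrableOn_prod_univ_of_swap_eq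
    (huρ.mono' (by fun_prop) (ae_of_all _ hbound)) (fun p => ?_) fun x hx y hy => ?_
  · simp only [Prod.fst_swap, Prod.snd_swap, hJsym p.2 p.1]
    ring
  · simp [min_eq_right (hu0 x hx), min_eq_right (hu0 y hy)]

theorem integrable_sq_negPart_of_integrable_mul_negPart {ν : Measure (α × α)}
    (hJpos : ∀ x y, 0 ≤ J x y) (hJmeas : Measurable fun p : α × α => J p.1 p.2) (hu : Measurable u)
    (hcross : Integrable (fun p : α × α =>
      (u p.1 - u p.2) * (-min (u p.1) 0 - -min (u p.2) 0) * J p.1 p.2) ν) :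
    Integrable (fun p : α × α => (-min (u p.1) 0 - -min (u p.2) 0) ^ 2 * J p.1 p.2) ν := by
  have hv : Measurable fun x => -min (u x) 0 := (hu.min measurable_const).neg
  refine hcross.neg.mono' (by fun_prop) (ae_of_all _ fun p => ?_)
  rw [Real.norm_of_nonneg (mul_nonneg (sq_nonneg _) (hJpos _ _))]
  exact sq_negPart_sub_negPart_mul_le _ _ (hJpos _ _)

theorem integral_sq_negPart_le_neg_integral_mul_negPart {ν : Measure (α × α)}
    (hJpos : ∀ x y, 0 ≤ J x y) (hJmeas : Measurable fun p : α × α => J p.1 p.2)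
    (hu : Measurable u)
    (hcross : Integrable (fun p : α × α =>
      (u p.1 - u p.2) * (-min (u p.1) 0 - -min (u p.2) 0) * J p.1 p.2) ν) :
    ∫ p, (-min (u p.1) 0 - -min (u p.2) 0) ^ 2 * J p.1 p.2 ∂ν
      ≤ -∫ p, (u p.1 - u p.2) * (-min (u p.1) 0 - -min (u p.2) 0) * J p.1 p.2 ∂ν := by
  rw [← integral_neg]
  exact integral_mono (integrable_sq_negPart_of_integrable_mul_negPart hJpos hJmeas hu hcross)
    hcross.neg fun p => sq_negPart_sub_negPart_mul_le _ _ (hJpos _ _)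

end

theorem negPart_energy_estimate_general
    (J : EuclideanSpace ℝ (Fin N) → EuclideanSpace ℝ (Fin N) → ℝ)
    (hJpos : ∀ x y, 0 ≤ J x y) (hJsym : ∀ x y, J x y = J y x)
    (hJmeas : Measurable fun p : EuclideanSpace ℝ (Fin N) × EuclideanSpace ℝ (Fin N) => J p.1 p.2)
    (Ω : Set (EuclideanSpace ℝ (Fin N)))
    (u : EuclideanSpace ℝ (Fin N) → ℝ) (hu : Measurable u)
    -- `u ∈ 𝒱^J(Ω)`, i.e. `ρ(u,Ω) < ∞`:
    (huρ : IntegrableOn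
      (fun p : EuclideanSpace ℝ (Fin N) × EuclideanSpace ℝ (Fin N) =>
        (u p.1 - u p.2) ^ 2 * J p.1 p.2) (Ω ×ˢ univ))
    -- `u ≥ 0` on `ℝ^N ∖ Ω`:
    (hu0 : ∀ x ∉ Ω, 0 ≤ u x) :
    -- `u⁻ ∈ 𝒟^J(Ω)`:
    ((∀ x ∉ Ω, -min (u x) 0 = 0) ∧
      Integrable (fun p : EuclideanSpace ℝ (Fin N) × EuclideanSpace ℝ (Fin N) =>
        (-min (u p.1) 0 - -min (u p.2) 0) ^ 2 * J p.1 p.2)) ∧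
    -- `ℰ_J(u,u⁻)` is well-defined:
    Integrable (fun p : EuclideanSpace ℝ (Fin N) × EuclideanSpace ℝ (Fin N) =>
      (u p.1 - u p.2) * (-min (u p.1) 0 - -min (u p.2) 0) * J p.1 p.2) ∧
    bilinForm J (fun x => -min (u x) 0) (fun x => -min (u x) 0)
      ≤ -bilinForm J u (fun x => -min (u x) 0) := by
  have hcross := integrable_mul_negPart_of_integrableOn hJpos hJsym hJmeas hu huρ hu0
  rw [← Measure.volume_eq_prod] at hcross
  refine ⟨⟨fun x hx => by simp [min_eq_right (hu0 x hx)],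
    integrable_sq_negPart_of_integrable_mul_negPart hJpos hJmeas hu hcross⟩, hcross, ?_⟩
  have henergy := integral_sq_negPart_le_neg_integral_mul_negPart hJpos hJmeas hu hcross
  simp only [bilinForm, ← sq]
  linarith

/-- Lemma: if `u ∈ 𝒱^J(Ω)` satisfies `u ≥ 0` on `ℝ^N ∖ Ω`, then the negative part
`u⁻ = -min(u,0)` lies in `𝒟^J(Ω)` and `ℰ_J(u⁻,u⁻) ≤ -ℰ_J(u,u⁻)`, the right-hand
side being well-defined. -/
theorem negPart_energy_estimate
    (J : EuclideanSpace ℝ (Fin N) → EuclideanSpace ℝ (Fin N) → ℝ)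
    (hJpos : ∀ x y, 0 ≤ J x y) (hJsym : ∀ x y, J x y = J y x)
    (hJmeas : Measurable fun p : EuclideanSpace ℝ (Fin N) × EuclideanSpace ℝ (Fin N) => J p.1 p.2)
    (Ω : Set (EuclideanSpace ℝ (Fin N))) (hΩ : IsOpen Ω)
    (u : EuclideanSpace ℝ (Fin N) → ℝ) (hu : Measurable u)
    -- `u ∈ 𝒱^J(Ω)`, i.e. `ρ(u,Ω) < ∞`:
    (huρ : IntegrableOn
      (fun p : EuclideanSpace ℝ (Fin N) × EuclideanSpace ℝ (Fin N) =>
        (u p.1 - u p.2) ^ 2 * J p.1 p.2) (Ω ×ˢ univ))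
    -- `u ≥ 0` on `ℝ^N ∖ Ω`:
    (hu0 : ∀ x ∉ Ω, 0 ≤ u x) :
    -- `u⁻ ∈ 𝒟^J(Ω)`:
    ((∀ x ∉ Ω, -min (u x) 0 = 0) ∧
      Integrable (fun p : EuclideanSpace ℝ (Fin N) × EuclideanSpace ℝ (Fin N) =>
        (-min (u p.1) 0 - -min (u p.2) 0) ^ 2 * J p.1 p.2)) ∧
    -- `ℰ_J(u,u⁻)` is well-defined:
    Integrable (fun p : EuclideanSpace ℝ (Fin N) × EuclideanSpace ℝ (Fin N) =>
      (u p.1 - u p.2) * (-min (u p.1) 0 - -min (u p.2) 0) * J p.1 p.2) ∧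
    bilinForm J (fun x => -min (u x) 0) (fun x => -min (u x) 0)
      ≤ -bilinForm J u (fun x => -min (u x) 0) :=
  negPart_energy_estimate_general J hJpos hJsym hJmeas Ω u hu huρ hu0

end
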